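/- arXiv:1001.2383 — 4 statements merged into one kernel-verified Lean document; each statement's English description precedes it below -/
import Mathlib

section
/- Let ρ₁ : ℝ → ℝ be a smooth, even, nonnegative function with support contained in [−2, 2] and nonincreasing on [0, ∞), and for h > 0 set ρ_h(t) = h⁻¹ ρ₁(t/h). Let g : ℝ → ℝ be positive and nondecreasing. Then for every t ∈ ℝ and every h > 0, (g * ρ_h')(t) ≥ ρ₁(1) · δ^h g(t), where δ^h g(t) = (g(t+h) − g(t−h))/(2h) and ρ_h' is the derivative of ρ_h. -/
open MeasureTheory Real Set

/-- Convolution of two real functions on ℝ: `(f * k)(t) = ∫ f(t − s) k(s) ds`. -/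
noncomputable def conv (f k : ℝ → ℝ) (t : ℝ) : ℝ := ∫ s : ℝ, f (t - s) * k s

/-- The rescaled mollifier `ρ_h(t) = h⁻¹ ρ₁(t/h)`. -/
noncomputable def rescale (ρ₁ : ℝ → ℝ) (h t : ℝ) : ℝ := h⁻¹ * ρ₁ (t / h)

/-- The discrete time derivative `δ^h g(t) = (g(t+h) − g(t−h))/(2h)`. -/
noncomputable def deltah (g : ℝ → ℝ) (h t : ℝ) : ℝ := (g (t + h) - g (t - h)) / (2 * h)

open Filter in
lemma aux_deriv_nonpos {f : ℝ → ℝ} {x : ℝ} (hf : DifferentiableAt ℝ f x)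
    (ha : AntitoneOn f (Ici 0)) (hx : 0 < x) : deriv f x ≤ 0 := by
  have h1 : Tendsto (slope f x) (nhdsWithin x (Ioi x)) (nhds (deriv f x)) :=
    (hasDerivAt_iff_tendsto_slope.1 hf.hasDerivAt).mono_left
      (nhdsWithin_mono x fun y (hy : y ∈ Ioi x) =>
        Set.mem_compl_singleton_iff.mpr (ne_of_gt (mem_Ioi.1 hy)))
  refine le_of_tendsto h1 ?_
  filter_upwards [self_mem_nhdsWithin] with y hy
  have hxy : x < y := hy
  have hfy : f y ≤ f x := ha (le_of_lt hx) (le_of_lt (hx.trans hxy)) hxy.le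
  rw [slope_def_field]
  have : (f y - f x) / (y - x) ≤ 0 :=
    div_nonpos_iff.2 (Or.inr ⟨by linarith, by linarith⟩)
  simpa [div_eq_inv_mul] using this

lemma aux_odd_deriv {f : ℝ → ℝ} (hf : Differentiable ℝ f) (he : ∀ t, f (-t) = f t) (x : ℝ) :
    deriv f (-x) = - deriv f x := by
  have h1 : HasDerivAt f (deriv f (-x)) (-x) := (hf _).hasDerivAt
  have h2 : HasDerivAt (fun y : ℝ => f (-y)) (deriv f (-x) * -1) x :=
    HasDerivAt.comp x h1 (hasDerivAt_neg x)
  have h3 : (fun y : ℝ => f (-y)) = f := funext he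
  rw [h3] at h2
  have h4 := h2.deriv
  linarith

/-- Lemma A2 (i): if `ρ₁` is a smooth, even, nonnegative mollifier supported in
`[−2,2]` and nonincreasing on `[0,∞)`, and `g` is positive and nondecreasing, then
`(g * ρ_h')(t) ≥ ρ₁(1) δ^h g(t)` for all `t ∈ ℝ`, `h > 0`. -/
theorem conv_deriv_mollifier_ge (ρ₁ g : ℝ → ℝ)
    (hρ_smooth : ContDiff ℝ (⊤ : ℕ∞) ρ₁)
    (hρ_even : ∀ t : ℝ, ρ₁ (-t) = ρ₁ t)
    (hρ_nonneg : ∀ t : ℝ, 0 ≤ ρ₁ t)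
    (hρ_supp : Function.support ρ₁ ⊆ Icc (-2 : ℝ) 2)
    (hρ_mono : AntitoneOn ρ₁ (Ici (0 : ℝ)))
    (hg_pos : ∀ t : ℝ, 0 < g t)
    (hg_mono : Monotone g) :
    ∀ t : ℝ, ∀ h : ℝ, 0 < h →
      conv g (deriv (rescale ρ₁ h)) t ≥ ρ₁ 1 * deltah g h t := by
  intro t h hpos
  have hne : h ≠ 0 := ne_of_gt hpos
  set R : ℝ → ℝ := rescale ρ₁ h with hRset
  have hRlam : R = fun s : ℝ => h⁻¹ * ρ₁ (s / h) := rfl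
  have hcd : ContDiff ℝ (⊤ : ℕ∞) R := by
    rw [hRlam]
    exact contDiff_const.mul (hρ_smooth.comp (contDiff_id.div_const h))
  have hdiff : Differentiable ℝ R := hcd.differentiable (by simp)
  set ψ : ℝ → ℝ := deriv R with hψset
  have hψcont : Continuous ψ := hcd.continuous_deriv (by simp)
  have hRe : ∀ s, R (-s) = R s := by
    intro s
    rw [hRlam]
    simp [neg_div, hρ_even]
  have hψodd : ∀ s, ψ (-s) = -ψ s := fun s => aux_odd_deriv hdiff hRe s
  have hRanti : AntitoneOn R (Ici 0) := by
    intro a ha b hb hab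
    rw [hRlam]
    have h1 : ρ₁ (b / h) ≤ ρ₁ (a / h) :=
      hρ_mono (div_nonneg ha hpos.le) (div_nonneg hb hpos.le)
        (div_le_div_of_nonneg_right hab hpos.le)
    exact mul_le_mul_of_nonneg_left h1 (inv_nonneg.2 hpos.le)
  have hψnonpos : ∀ s, 0 < s → ψ s ≤ 0 := fun s hs =>
    aux_deriv_nonpos (hdiff s) hRanti hs
  have hRzero : ∀ s, s ∉ Icc (-(2*h)) (2*h) → R s = 0 := by
    intro s hs
    have hz : ρ₁ (s / h) = 0 := by
      by_contra hnz
      have hmem := hρ_supp (Function.mem_support.2 hnz)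
      apply hs
      constructor
      · have := (le_div_iff₀ hpos).1 hmem.1
        linarith
      · have := (div_le_iff₀ hpos).1 hmem.2
        linarith
    rw [hRlam]
    simp [hz]
  have hψzero : ∀ s, s ∉ Icc (-(2*h)) (2*h) → ψ s = 0 := by
    intro s hs
    have hopen : IsOpen (Icc (-(2*h)) (2*h))ᶜ := isClosed_Icc.isOpen_compl
    have hev : R =ᶠ[nhds s] (fun _ => (0:ℝ)) :=
      Filter.eventuallyEq_of_mem (hopen.mem_nhds hs) (fun y hy => hRzero y hy)
    rw [hψset, hev.deriv_eq]
    simp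
  -- integrability
  set F : ℝ → ℝ := fun s => g (t - s) * ψ s with hFset
  have hgmeas : Measurable g := hg_mono.measurable
  have hFmeas : AEStronglyMeasurable F volume :=
    ((hgmeas.comp (measurable_const.sub measurable_id)).mul
      hψcont.measurable).aestronglyMeasurable
  obtain ⟨M, hM⟩ := (isCompact_Icc :
      IsCompact (Icc (-(2*h)) (2*h))).exists_bound_of_continuousOn hψcont.continuousOn
  have hM0 : 0 ≤ M := le_trans (norm_nonneg _) (hM 0 ⟨by linarith, by linarith⟩)
  have hbound : ∀ s, ‖F s‖ ≤
      Set.indicator (Icc (-(2*h)) (2*h)) (fun _ => g (t + 2*h) * M) s := by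
    intro s
    by_cases hs : s ∈ Icc (-(2*h)) (2*h)
    · rw [Set.indicator_of_mem hs]
      have h1 : ‖g (t - s)‖ ≤ g (t + 2*h) := by
        rw [Real.norm_eq_abs, abs_of_pos (hg_pos _)]
        exact hg_mono (by linarith [hs.1])
      calc ‖F s‖ = ‖g (t - s)‖ * ‖ψ s‖ := norm_mul _ _
        _ ≤ g (t + 2*h) * M :=
          mul_le_mul h1 (hM s hs) (norm_nonneg _) (hg_pos _).le
    · rw [Set.indicator_of_notMem hs]
      have : F s = 0 := by rw [hFset]; simp [hψzero s hs]
      simp [this]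
  have hind : Integrable
      (Set.indicator (Icc (-(2*h)) (2*h)) (fun _ => g (t + 2*h) * M)) volume := by
    rw [integrable_indicator_iff measurableSet_Icc]
    exact integrableOn_const measure_Icc_lt_top.ne
  have hFint : Integrable F volume :=
    hind.mono' hFmeas (Filter.Eventually.of_forall hbound)
  have hFnegint : Integrable (fun s => F (-s)) volume := hFint.comp_neg
  -- the symmetrized integrand
  set H : ℝ → ℝ := fun s => (g (t + s) - g (t - s)) * (-ψ s) with hHset
  have hHF : ∀ s, H s = F s + F (-s) := by
    intro s
    rw [hHset, hFset]
    simp only [sub_neg_eq_add, hψodd s]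
    ring
  have hHeq : H = fun s => F s + F (-s) := funext hHF
  have hHint : Integrable H volume := by
    rw [hHeq]; exact hFint.add hFnegint
  have hkey : 2 * conv g ψ t = ∫ s, H s := by
    have h1 : conv g ψ t = ∫ s, F s := rfl
    have h2 : (∫ s, F (-s)) = ∫ s, F s := by
      exact integral_neg_eq_self F volume
    rw [h1, hHeq, integral_add hFint hFnegint, h2]
    ring
  have hHnonneg : ∀ s, 0 ≤ H s := by
    intro s
    rcases lt_trichotomy s 0 with hs | hs | hs
    · have h1 : g (t + s) - g (t - s) ≤ 0 := sub_nonpos.2 (hg_mono (by linarith))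
      have h3 := hψnonpos (-s) (by linarith)
      rw [hψodd s] at h3
      have h2 : -ψ s ≤ 0 := h3
      show (0:ℝ) ≤ (g (t + s) - g (t - s)) * (-ψ s)
      nlinarith
    · subst hs
      show (0:ℝ) ≤ (g (t + 0) - g (t - 0)) * (-ψ 0)
      simp
    · show (0:ℝ) ≤ (g (t + s) - g (t - s)) * (-ψ s)
      exact mul_nonneg (sub_nonneg.2 (hg_mono (by linarith)))
        (by linarith [hψnonpos s hs])
  -- FTC computation
  have hρ3 : ρ₁ 3 = 0 := by
    by_contra hnz
    have hmem := hρ_supp (Function.mem_support.2 hnz)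
    have := hmem.2
    norm_num at this
  have hftc : (∫ s in Ioc h (3*h), ψ s) = -(h⁻¹ * ρ₁ 1) := by
    have hle : h ≤ 3*h := by linarith
    rw [← intervalIntegral.integral_of_le hle]
    have : (∫ s in h..(3*h), ψ s) = R (3*h) - R h := by
      rw [hψset]
      exact intervalIntegral.integral_deriv_eq_sub (fun x _ => hdiff x)
        (hψcont.intervalIntegrable _ _)
    rw [this, hRlam]
    have e1 : (3*h)/h = 3 := by field_simp
    have e2 : h/h = 1 := div_self hne
    simp only [e1, e2, hρ3]
    ring
  set c : ℝ := g (t + h) - g (t - h) with hc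
  have hcnn : 0 ≤ c := sub_nonneg.2 (hg_mono (by linarith))
  have hstep1 : (∫ s in Ioc h (3*h), H s) ≤ ∫ s, H s :=
    setIntegral_le_integral hHint (Filter.Eventually.of_forall hHnonneg)
  have hstep2 : (∫ s in Ioc h (3*h), c * (-ψ s)) ≤ ∫ s in Ioc h (3*h), H s := by
    apply setIntegral_mono_on
    · exact (continuous_const.mul hψcont.neg).integrableOn_Ioc
    · exact hHint.integrableOn
    · exact measurableSet_Ioc
    · intro s hs
      have hs0 : 0 < s := lt_trans hpos hs.1
      have h1 : c ≤ g (t + s) - g (t - s) := by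
        have ha := hg_mono (show t + h ≤ t + s by linarith [hs.1.le])
        have hb := hg_mono (show t - s ≤ t - h by linarith [hs.1.le])
        rw [hc]; linarith
      have h2 : 0 ≤ -ψ s := by linarith [hψnonpos s hs0]
      show c * (-ψ s) ≤ (g (t + s) - g (t - s)) * (-ψ s)
      exact mul_le_mul_of_nonneg_right h1 h2
  have hstep3 : (∫ s in Ioc h (3*h), c * (-ψ s)) = c * (h⁻¹ * ρ₁ 1) := by
    rw [integral_const_mul]
    rw [integral_neg, hftc]
    ring
  have hfin : c * (h⁻¹ * ρ₁ 1) ≤ 2 * conv g ψ t := by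
    rw [hkey]
    calc c * (h⁻¹ * ρ₁ 1) = ∫ s in Ioc h (3*h), c * (-ψ s) := hstep3.symm
      _ ≤ ∫ s in Ioc h (3*h), H s := hstep2
      _ ≤ ∫ s, H s := hstep1
  have hδ : ρ₁ 1 * deltah g h t = ρ₁ 1 * (c / (2*h)) := by rw [deltah, hc]
  rw [ge_iff_le, hδ]
  have heq : 2 * (ρ₁ 1 * (c / (2*h))) = c * (h⁻¹ * ρ₁ 1) := by
    field_simp
  linarith [hfin, heq]
end

section
/- Let ρ₁ : ℝ → ℝ be a smooth, even, nonnegative function with support contained in [−2, 2] and nonincreasing on [0, ∞), and for h > 0 set ρ_h(t) = h⁻¹ ρ₁(t/h). There exists a constant c > 0, depending only on ρ₁, with the following property: if A > 0 and g : ℝ → (0, ∞) is differentiable with g'(t) ≥ −A g(t) for all t ∈ ℝ, then for every t ∈ ℝ and every h with 0 < h ≤ 1/A, (g * ρ_h')(t) ≥ ρ₁(1) · δ^h g(t) − c A (g(t) + g(t+h) + g(t−h)), where δ^h g(t) = (g(t+h) − g(t−h))/(2h). -/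
open MeasureTheory Real Set

section Aux

variable (ρ₁ : ℝ → ℝ)

private lemma aux_rho_zero (hρ_supp : Function.support ρ₁ ⊆ Icc (-2 : ℝ) 2) :
    ∀ x : ℝ, x ∉ Icc (-2:ℝ) 2 → ρ₁ x = 0 := fun x hx =>
  Function.support_subset_iff'.mp hρ_supp x hx

private lemma aux_rho_two (hρ_smooth : ContDiff ℝ (⊤ : ℕ∞) ρ₁)
    (hρ_supp : Function.support ρ₁ ⊆ Icc (-2 : ℝ) 2) : ρ₁ 2 = 0 := by
  have hA : Filter.Tendsto ρ₁ (nhdsWithin 2 (Ioi 2)) (nhds (ρ₁ 2)) :=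
    (hρ_smooth.continuous.tendsto 2).mono_left nhdsWithin_le_nhds
  have hB : Filter.Tendsto ρ₁ (nhdsWithin 2 (Ioi 2)) (nhds 0) := by
    apply Filter.Tendsto.congr' _ tendsto_const_nhds
    filter_upwards [self_mem_nhdsWithin] with x hx
    exact (aux_rho_zero ρ₁ hρ_supp x
      (by simp [mem_Icc]; intro; linarith [mem_Ioi.mp hx])).symm
  exact tendsto_nhds_unique hA hB

private lemma aux_rho_le_zero (hρ_even : ∀ t : ℝ, ρ₁ (-t) = ρ₁ t)
    (hρ_mono : AntitoneOn ρ₁ (Ici (0 : ℝ))) : ∀ x : ℝ, ρ₁ x ≤ ρ₁ 0 := by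
  intro x
  rcases le_total 0 x with hx | hx
  · exact hρ_mono (mem_Ici.mpr le_rfl) (mem_Ici.mpr hx) hx
  · rw [← hρ_even x]
    exact hρ_mono (mem_Ici.mpr le_rfl) (mem_Ici.mpr (by linarith)) (by linarith)

private lemma aux_rho_ge_one (hρ_even : ∀ t : ℝ, ρ₁ (-t) = ρ₁ t)
    (hρ_mono : AntitoneOn ρ₁ (Ici (0 : ℝ))) : ∀ x ∈ Icc (-1:ℝ) 1, ρ₁ 1 ≤ ρ₁ x := by
  intro x hx
  rcases le_total 0 x with h0 | h0
  · exact hρ_mono (mem_Ici.mpr h0) (mem_Ici.mpr zero_le_one) hx.2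
  · rw [← hρ_even x]
    exact hρ_mono (mem_Ici.mpr (by linarith)) (mem_Ici.mpr zero_le_one) (by linarith [hx.1])

private lemma aux_rho_deriv_odd (hρ_smooth : ContDiff ℝ (⊤ : ℕ∞) ρ₁)
    (hρ_even : ∀ t : ℝ, ρ₁ (-t) = ρ₁ t) : ∀ x : ℝ, deriv ρ₁ x = - deriv ρ₁ (-x) := by
  intro x
  have hd : HasDerivAt ρ₁ (deriv ρ₁ (-x) * (-1)) x := by
    have h1 := ((hρ_smooth.differentiable (by simp) (-x)).hasDerivAt).comp x (hasDerivAt_neg x)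
    have he : (ρ₁ ∘ fun y : ℝ => -y) = ρ₁ := funext fun t => hρ_even t
    rwa [he] at h1
  rw [hd.deriv]; ring

private lemma aux_rho_deriv_nonpos (hρ_smooth : ContDiff ℝ (⊤ : ℕ∞) ρ₁)
    (hρ_mono : AntitoneOn ρ₁ (Ici (0 : ℝ))) : ∀ x : ℝ, 0 < x → deriv ρ₁ x ≤ 0 := by
  intro x hx
  have hd : HasDerivWithinAt ρ₁ (deriv ρ₁ x) (Ioi x) x :=
    ((hρ_smooth.differentiable (by simp) x).hasDerivAt).hasDerivWithinAt
  rw [hasDerivWithinAt_iff_tendsto_slope] at hd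
  have hset : Ioi x \ {x} = Ioi x := by
    ext y; constructor
    · exact fun h => h.1
    · exact fun h => ⟨h, by simp [mem_Ioi.mp h |>.ne']⟩
  rw [hset] at hd
  refine le_of_tendsto hd ?_
  filter_upwards [self_mem_nhdsWithin] with y hy
  have hy' : x < y := mem_Ioi.mp hy
  have hle : ρ₁ y ≤ ρ₁ x := hρ_mono (mem_Ici.mpr hx.le) (mem_Ici.mpr (by linarith)) hy'.le
  rw [slope_def_field]
  exact div_nonpos_of_nonpos_of_nonneg (by linarith) (by linarith)

private lemma aux_rho_deriv_zero (hρ_smooth : ContDiff ℝ (⊤ : ℕ∞) ρ₁)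
    (hρ_supp : Function.support ρ₁ ⊆ Icc (-2 : ℝ) 2) :
    ∀ x : ℝ, x ∉ Icc (-2:ℝ) 2 → deriv ρ₁ x = 0 := by
  intro x hx
  have hopen : IsOpen (Icc (-2:ℝ) 2)ᶜ := isClosed_Icc.isOpen_compl
  have hev : ρ₁ =ᶠ[nhds x] (fun _ => (0:ℝ)) := by
    filter_upwards [hopen.mem_nhds hx] with y hy
    exact aux_rho_zero ρ₁ hρ_supp y hy
  rw [hev.deriv_eq, deriv_const]

variable (A : ℝ) (g : ℝ → ℝ)

private lemma aux_phi_hasDeriv (hg : Differentiable ℝ g) :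
    ∀ x : ℝ, HasDerivAt (fun y => Real.exp (A*y) * g y)
      (Real.exp (A*x) * (deriv g x + A * g x)) x := by
  intro x
  have h1 : HasDerivAt (fun y : ℝ => Real.exp (A*y)) (A * Real.exp (A*x)) x := by
    have h0 : HasDerivAt (fun y : ℝ => A * y) A x := by
      simpa using (hasDerivAt_id x).const_mul A
    have := (Real.hasDerivAt_exp (A*x)).comp x h0
    exact this.congr_deriv (mul_comm _ _)
  have h2 := h1.mul (hg x).hasDerivAt
  exact h2.congr_deriv (by ring)

private lemma aux_g_key (hg : Differentiable ℝ g)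
    (hg' : ∀ t : ℝ, deriv g t ≥ -A * g t) :
    ∀ u v : ℝ, u ≤ v → g u ≤ Real.exp (A*(v-u)) * g v := by
  have hmono : Monotone (fun y => Real.exp (A*y) * g y) := by
    apply monotone_of_deriv_nonneg
    · exact fun x => (aux_phi_hasDeriv A g hg x).differentiableAt
    · intro x
      rw [(aux_phi_hasDeriv A g hg x).deriv]
      have := hg' x
      have h2 : 0 ≤ deriv g x + A * g x := by linarith
      positivity
  intro u v huv
  have h2 : Real.exp (A*u) * g u ≤ Real.exp (A*v) * g v := hmono huv
  have h3 : (0:ℝ) < Real.exp (A*u) := Real.exp_pos _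
  have h4 : Real.exp (A*(v-u)) * Real.exp (A*u) = Real.exp (A*v) := by
    rw [← Real.exp_add]; ring_nf
  rw [← mul_le_mul_iff_right₀ h3]
  calc Real.exp (A*u) * g u ≤ Real.exp (A*v) * g v := h2
    _ = Real.exp (A*u) * (Real.exp (A*(v-u)) * g v) := by rw [← h4]; ring

private lemma aux_deriv_g_intInt (hg : Differentiable ℝ g)
    (hg' : ∀ t : ℝ, deriv g t ≥ -A * g t) :
    ∀ a b : ℝ, IntervalIntegrable (deriv g) volume a b := by
  intro a b
  have hc : Continuous fun y : ℝ => Real.exp (A*y) * g y :=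
    (Real.continuous_exp.comp (continuous_const.mul continuous_id)).mul hg.continuous
  have hint0 : IntervalIntegrable (fun x => Real.exp (A*x) * (deriv g x + A * g x))
      volume a b := by
    apply intervalIntegral.intervalIntegrable_deriv_of_nonneg hc.continuousOn
      (fun x _ => aux_phi_hasDeriv A g hg x)
    intro x _
    have := hg' x
    have h2 : 0 ≤ deriv g x + A * g x := by linarith
    positivity
  have hint1 : IntervalIntegrable
      (fun x => Real.exp (-(A*x)) * (Real.exp (A*x) * (deriv g x + A * g x))) volume a b :=
    hint0.continuousOn_mul
      ((Real.continuous_exp.comp (continuous_const.mul continuous_id).neg).continuousOn)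
  have hint2 : IntervalIntegrable
      (fun x => Real.exp (-(A*x)) * (Real.exp (A*x) * (deriv g x + A * g x)) - A * g x)
      volume a b := hint1.sub ((continuous_const.mul hg.continuous).intervalIntegrable a b)
  have he : (deriv g) = fun x =>
      Real.exp (-(A*x)) * (Real.exp (A*x) * (deriv g x + A * g x)) - A * g x := by
    funext x
    rw [← mul_assoc, ← Real.exp_add]
    simp
  rw [he]; exact hint2

private lemma aux_deriv_g_comp_intInt (hg : Differentiable ℝ g)
    (hg' : ∀ t : ℝ, deriv g t ≥ -A * g t) (t h : ℝ) (hh : 0 < h) :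
    ∀ a b : ℝ, IntervalIntegrable (fun σ => deriv g (t - h*σ)) volume a b := by
  intro a b
  have h1 := (aux_deriv_g_intInt A g hg hg' (t - h*a) (t - h*b)).comp_sub_left t
  have e1 : t - (t - h*a) = h*a := by ring
  have e2 : t - (t - h*b) = h*b := by ring
  rw [e1, e2] at h1
  have h2 := h1.comp_mul_left (c := h)
  have hne : h ≠ 0 := ne_of_gt hh
  have e3 : h*a/h = a := by field_simp
  have e4 : h*b/h = b := by field_simp
  rw [e3, e4] at h2
  exact h2

private lemma aux_conv_eq (hρ_smooth : ContDiff ℝ (⊤ : ℕ∞) ρ₁)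
    (hdzero : ∀ x : ℝ, x ∉ Icc (-2:ℝ) 2 → deriv ρ₁ x = 0)
    (t h : ℝ) (hh : 0 < h) :
    conv g (deriv (rescale ρ₁ h)) t = h⁻¹ * ∫ σ in (-2:ℝ)..2, g (t - h*σ) * deriv ρ₁ σ := by
  have hne : h ≠ 0 := ne_of_gt hh
  have hresd : ∀ s : ℝ, HasDerivAt (rescale ρ₁ h) (h⁻¹ * (deriv ρ₁ (s/h) * h⁻¹)) s := by
    intro s
    have h1 : HasDerivAt (fun y : ℝ => y / h) h⁻¹ s := by
      simpa [one_div] using (hasDerivAt_id s).div_const h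
    have h2 := ((hρ_smooth.differentiable (by simp) (s/h)).hasDerivAt).comp s h1
    exact h2.const_mul h⁻¹
  have hconv1 : conv g (deriv (rescale ρ₁ h)) t
      = ∫ s : ℝ, g (t - s) * (h⁻¹ * (deriv ρ₁ (s/h) * h⁻¹)) := by
    unfold conv
    congr 1
    funext s
    rw [(hresd s).deriv]
  have hFsupp : ∀ s : ℝ, s ∉ Icc (-(2*h)) (2*h) →
      g (t - s) * (h⁻¹ * (deriv ρ₁ (s/h) * h⁻¹)) = 0 := by
    intro s hs
    have hmem : s/h ∉ Icc (-2:ℝ) 2 := by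
      intro hmem
      apply hs
      rw [mem_Icc] at hmem ⊢
      constructor
      · have := (le_div_iff₀ hh).mp hmem.1; linarith
      · have := (div_le_iff₀ hh).mp hmem.2; linarith
    rw [hdzero _ hmem]; ring
  have h2h : -(2*h) ≤ 2*h := by linarith
  have hconv2 : (∫ s : ℝ, g (t - s) * (h⁻¹ * (deriv ρ₁ (s/h) * h⁻¹)))
      = ∫ s in (-(2*h))..(2*h), g (t - s) * (h⁻¹ * (deriv ρ₁ (s/h) * h⁻¹)) := by
    rw [intervalIntegral.integral_of_le h2h, ← integral_Icc_eq_integral_Ioc,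
      setIntegral_eq_integral_of_forall_compl_eq_zero hFsupp]
  have hconv3 : (∫ s in (-(2*h))..(2*h), g (t - s) * (h⁻¹ * (deriv ρ₁ (s/h) * h⁻¹)))
      = ∫ s in (-(2*h))..(2*h), (fun σ => g (t - h*σ) * (h⁻¹ * (deriv ρ₁ σ * h⁻¹))) (s/h) := by
    apply intervalIntegral.integral_congr
    intro s _
    simp only
    rw [mul_div_cancel₀ _ hne]
  have h4 := intervalIntegral.integral_comp_div (a := -(2*h)) (b := 2*h) (c := h)
    (fun σ => g (t - h*σ) * (h⁻¹ * (deriv ρ₁ σ * h⁻¹))) hne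
  rw [hconv1, hconv2, hconv3, h4]
  have e1 : -(2*h)/h = -2 := by field_simp
  have e2 : 2*h/h = 2 := by field_simp
  rw [e1, e2, smul_eq_mul]
  rw [← intervalIntegral.integral_const_mul, ← intervalIntegral.integral_const_mul]
  apply intervalIntegral.integral_congr
  intro s _
  simp only
  field_simp

end Aux

set_option maxHeartbeats 1600000 in
/-- Lemma A2 (ii): if `ρ₁` is a smooth, even, nonnegative mollifier supported in
`[−2,2]` and nonincreasing on `[0,∞)`, then there is a constant `c > 0`, depending
only on `ρ₁`, such that for every `A > 0` and every differentiable positive `g`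
with `g' ≥ −A g`, for all `t` and `0 < h ≤ 1/A`,
`(g * ρ_h')(t) ≥ ρ₁(1) δ^h g(t) − c A (g(t) + g(t+h) + g(t−h))`. -/
theorem conv_deriv_mollifier_ge_of_deriv_ge (ρ₁ : ℝ → ℝ)
    (hρ_smooth : ContDiff ℝ (⊤ : ℕ∞) ρ₁)
    (hρ_even : ∀ t : ℝ, ρ₁ (-t) = ρ₁ t)
    (hρ_nonneg : ∀ t : ℝ, 0 ≤ ρ₁ t)
    (hρ_supp : Function.support ρ₁ ⊆ Icc (-2 : ℝ) 2)
    (hρ_mono : AntitoneOn ρ₁ (Ici (0 : ℝ))) :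
    ∃ c : ℝ, 0 < c ∧ ∀ (A : ℝ), 0 < A → ∀ g : ℝ → ℝ, Differentiable ℝ g →
      (∀ t : ℝ, 0 < g t) → (∀ t : ℝ, deriv g t ≥ -A * g t) →
      ∀ t : ℝ, ∀ h : ℝ, 0 < h → h ≤ 1 / A →
        conv g (deriv (rescale ρ₁ h)) t ≥
          ρ₁ 1 * deltah g h t - c * A * (g t + g (t + h) + g (t - h)) := by
  have hρ_cont : Continuous ρ₁ := hρ_smooth.continuous
  have hρ_diff : Differentiable ℝ ρ₁ := hρ_smooth.differentiable (by simp)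
  have hρd_cont : Continuous (deriv ρ₁) := hρ_smooth.continuous_deriv (by simp)
  have hρ2 : ρ₁ 2 = 0 := aux_rho_two ρ₁ hρ_smooth hρ_supp
  have hρn2 : ρ₁ (-2) = 0 := (hρ_even 2).trans hρ2
  have hρn1 : ρ₁ (-1) = ρ₁ 1 := hρ_even 1
  have hρ_le0 := aux_rho_le_zero ρ₁ hρ_even hρ_mono
  have hρ_ge1 := aux_rho_ge_one ρ₁ hρ_even hρ_mono
  have hρ10 : ρ₁ 1 ≤ ρ₁ 0 := hρ_le0 1
  have hdnn : ∀ σ ∈ Icc (-2:ℝ) (-1), 0 ≤ deriv ρ₁ σ := by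
    intro σ hσ
    have h1 := aux_rho_deriv_nonpos ρ₁ hρ_smooth hρ_mono (-σ) (by linarith [hσ.2])
    have h2 := aux_rho_deriv_odd ρ₁ hρ_smooth hρ_even σ
    linarith
  have hdzero := aux_rho_deriv_zero ρ₁ hρ_smooth hρ_supp
  refine ⟨1 + (1 + 3 * Real.exp 3) * ρ₁ 0, by nlinarith [hρ_nonneg 0, Real.exp_pos 3], ?_⟩
  intro A hA g hg hgpos hg' t h hh hhA
  have hne : h ≠ 0 := ne_of_gt hh
  have hinv : (0:ℝ) < h⁻¹ := inv_pos.mpr hh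
  have hAh : A * h ≤ 1 := by
    have := (le_div_iff₀ hA).mp hhA
    linarith
  have key := aux_g_key A g hg hg'
  have hGder : ∀ σ : ℝ, HasDerivAt (fun σ : ℝ => g (t - h*σ)) (deriv g (t - h*σ) * (-h)) σ := by
    intro σ
    have haff : HasDerivAt (fun σ : ℝ => t - h*σ) (-h) σ := by
      exact ((hasDerivAt_const σ t).sub ((hasDerivAt_id σ).const_mul h)).congr_deriv (by simp)
    exact ((hg (t - h*σ)).hasDerivAt).comp σ haff
  -- upper bound for g on [t-2h, t+h]
  have gupper : ∀ σ ∈ Icc (-1:ℝ) 2, g (t - h*σ) ≤ Real.exp 3 * g (t+h) := by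
    intro σ hσ
    have hu : t - h*σ ≤ t + h := by
      have := mul_le_mul_of_nonneg_left hσ.1 hh.le
      linarith
    have h1 := key (t - h*σ) (t+h) hu
    have h2 : A * ((t+h) - (t - h*σ)) ≤ 3 := by
      have e : A * ((t+h) - (t - h*σ)) = (A*h) * (1 + σ) := by ring
      rw [e]
      have h1σ : (0:ℝ) ≤ 1 + σ := by linarith [hσ.1]
      have h3σ : 1 + σ ≤ 3 := by linarith [hσ.2]
      nlinarith [mul_nonneg (sub_nonneg.mpr hAh) h1σ, mul_pos hA hh]
    have h3 : Real.exp (A * ((t+h) - (t - h*σ))) ≤ Real.exp 3 := Real.exp_le_exp.mpr h2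
    calc g (t - h*σ) ≤ Real.exp (A * ((t+h) - (t - h*σ))) * g (t+h) := h1
      _ ≤ Real.exp 3 * g (t+h) := mul_le_mul_of_nonneg_right h3 (hgpos _).le
  -- lower bound for g on [t+h, t+2h]
  have glower : ∀ σ ∈ Icc (-2:ℝ) (-1), (1 - A*h) * g (t+h) ≤ g (t - h*σ) := by
    intro σ hσ
    have hu : t + h ≤ t - h*σ := by
      have := mul_le_mul_of_nonneg_left hσ.2 hh.le
      linarith
    have h1 := key (t+h) (t - h*σ) hu
    set d := (t - h*σ) - (t+h) with hd
    have hd0 : 0 ≤ d := by simp only [hd]; linarith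
    have hdh : d ≤ h := by
      have := mul_le_mul_of_nonneg_left hσ.1 hh.le
      simp only [hd]; linarith
    have h5 : Real.exp (-(A*d)) * g (t+h) ≤ g (t - h*σ) := by
      have h6 := mul_le_mul_of_nonneg_left h1 (Real.exp_pos (-(A*d))).le
      rwa [← mul_assoc, ← Real.exp_add, neg_add_cancel, Real.exp_zero, one_mul] at h6
    have h7 : 1 - A*h ≤ Real.exp (-(A*d)) := by
      have h8 := Real.add_one_le_exp (-(A*d))
      have h9 : A*d ≤ A*h := mul_le_mul_of_nonneg_left hdh hA.le
      linarith
    calc (1 - A*h) * g (t+h) ≤ Real.exp (-(A*d)) * g (t+h) :=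
          mul_le_mul_of_nonneg_right h7 (hgpos _).le
      _ ≤ g (t - h*σ) := h5
  -- integrability
  have hGcont : Continuous fun σ : ℝ => g (t - h*σ) :=
    hg.continuous.comp (continuous_const.sub (continuous_const.mul continuous_id))
  have hIint : ∀ a b : ℝ, IntervalIntegrable (fun σ => g (t - h*σ) * deriv ρ₁ σ) volume a b :=
    fun a b => (hGcont.mul hρd_cont).intervalIntegrable a b
  have hdgc := aux_deriv_g_comp_intInt A g hg hg' t h hh
  have hJint : ∀ a b : ℝ, IntervalIntegrable (fun σ => deriv g (t - h*σ) * ρ₁ σ) volume a b :=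
    fun a b => (hdgc a b).mul_continuousOn hρ_cont.continuousOn
  -- main decomposition
  have hconv := aux_conv_eq ρ₁ g hρ_smooth hdzero t h hh
  set I1 := ∫ σ in (-2:ℝ)..(-1), g (t - h*σ) * deriv ρ₁ σ with hI1def
  set I2 := ∫ σ in (-1:ℝ)..2, g (t - h*σ) * deriv ρ₁ σ with hI2def
  set J1 := ∫ σ in (-1:ℝ)..1, deriv g (t - h*σ) * ρ₁ σ with hJ1def
  set J2 := ∫ σ in (1:ℝ)..2, deriv g (t - h*σ) * ρ₁ σ with hJ2def
  have hIsplit : (∫ σ in (-2:ℝ)..2, g (t - h*σ) * deriv ρ₁ σ) = I1 + I2 :=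
    (intervalIntegral.integral_add_adjacent_intervals (hIint (-2) (-1)) (hIint (-1) 2)).symm
  have hJsplit : (∫ σ in (-1:ℝ)..2, deriv g (t - h*σ) * ρ₁ σ) = J1 + J2 :=
    (intervalIntegral.integral_add_adjacent_intervals (hJint (-1) 1) (hJint 1 2)).symm
  -- Step 1 : lower bound for I1
  have hI1 : ((1 - A*h) * g (t+h)) * ρ₁ 1 ≤ I1 := by
    have hFTC : (∫ σ in (-2:ℝ)..(-1), deriv ρ₁ σ) = ρ₁ (-1) - ρ₁ (-2) :=
      intervalIntegral.integral_deriv_eq_sub (fun x _ => hρ_diff x)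
        (hρd_cont.intervalIntegrable _ _)
    have hpt : ∀ σ ∈ Icc (-2:ℝ) (-1),
        ((1 - A*h) * g (t+h)) * deriv ρ₁ σ ≤ g (t - h*σ) * deriv ρ₁ σ := fun σ hσ =>
      mul_le_mul_of_nonneg_right (glower σ hσ) (hdnn σ hσ)
    have hmono := intervalIntegral.integral_mono_on (by norm_num : (-2:ℝ) ≤ -1)
      ((continuous_const.mul hρd_cont).intervalIntegrable _ _) (hIint (-2) (-1)) hpt
    simp only [Pi.mul_apply] at hmono
    rwa [intervalIntegral.integral_const_mul, hFTC, hρn1, hρn2, sub_zero] at hmono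
  -- Step 2 : integration by parts for I2
  have hIBP : I2 = -(g (t+h) * ρ₁ 1) + h * (J1 + J2) := by
    have h0 := intervalIntegral.integral_mul_deriv_eq_deriv_mul_of_hasDerivAt
      (a := (-1:ℝ)) (b := 2)
      (u := fun σ => g (t - h*σ)) (v := ρ₁)
      (u' := fun σ => deriv g (t - h*σ) * (-h)) (v' := deriv ρ₁)
      hGcont.continuousOn hρ_cont.continuousOn
      (fun x _ => hGder x) (fun x _ => (hρ_diff x).hasDerivAt)
      ((hdgc (-1) 2).mul_const (-h)) (hρd_cont.intervalIntegrable _ _)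
    have e1 : t - h*(2:ℝ) = t - 2*h := by ring
    have e2 : t - h*(-1:ℝ) = t + h := by ring
    have e3 : (fun σ => (deriv g (t - h*σ) * (-h)) * ρ₁ σ)
        = fun σ => (-h) * (deriv g (t - h*σ) * ρ₁ σ) := by funext σ; ring
    rw [hI2def, h0]
    simp only [hρ2, hρn1, mul_zero, zero_sub]
    rw [e2, e3, intervalIntegral.integral_const_mul, hJsplit]
    ring
  -- Step 3 : FTC for the discrete derivative
  have hK : (∫ σ in (-1:ℝ)..1, deriv g (t - h*σ)) = (g (t+h) - g (t-h)) / h := by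
    have hKd : ∀ σ ∈ uIcc (-1:ℝ) 1,
        HasDerivAt (fun σ : ℝ => -(g (t - h*σ)) / h) (deriv g (t - h*σ)) σ := by
      intro σ _
      have h1 := ((hGder σ).neg).div_const h
      exact h1.congr_deriv (by rw [mul_neg, neg_neg, mul_div_assoc, div_self hne, mul_one])
    rw [intervalIntegral.integral_eq_sub_of_hasDerivAt hKd (hdgc (-1) 1)]
    have e1 : t - h*(1:ℝ) = t - h := by ring
    have e2 : t - h*(-1:ℝ) = t + h := by ring
    rw [e1, e2]
    ring
  -- Step 4 : lower bound for J2
  have hJ2 : -(A * (Real.exp 3 * g (t+h)) * ρ₁ 0) ≤ J2 := by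
    have hpt : ∀ σ ∈ Icc (1:ℝ) 2,
        -(A * (Real.exp 3 * g (t+h)) * ρ₁ 0) ≤ deriv g (t - h*σ) * ρ₁ σ := by
      intro σ hσ
      have hg3 : g (t - h*σ) ≤ Real.exp 3 * g (t+h) := gupper σ ⟨by linarith [hσ.1], hσ.2⟩
      have p1 : (-A * g (t - h*σ)) * ρ₁ σ ≤ deriv g (t - h*σ) * ρ₁ σ :=
        mul_le_mul_of_nonneg_right (hg' _) (hρ_nonneg σ)
      have p2 : A * g (t - h*σ) * ρ₁ σ ≤ A * (Real.exp 3 * g (t+h)) * ρ₁ 0 :=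
        mul_le_mul (mul_le_mul_of_nonneg_left hg3 hA.le) (hρ_le0 σ) (hρ_nonneg σ)
          (mul_nonneg hA.le (mul_nonneg (Real.exp_pos 3).le (hgpos _).le))
      have p3 : (-A * g (t - h*σ)) * ρ₁ σ = -(A * g (t - h*σ) * ρ₁ σ) := by ring
      linarith
    have hmono := intervalIntegral.integral_mono_on (by norm_num : (1:ℝ) ≤ 2)
      (intervalIntegrable_const) (hJint 1 2) hpt
    have e5 : ((2:ℝ) - 1) • (-(A * (Real.exp 3 * g (t+h)) * ρ₁ 0))
        = -(A * (Real.exp 3 * g (t+h)) * ρ₁ 0) := by norm_num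
    rwa [intervalIntegral.integral_const, e5] at hmono
  -- Step 5 : lower bound for J1
  have hJ1 : (ρ₁ 1 / 2) * ((g (t+h) - g (t-h)) / h)
      - 2 * (A * (Real.exp 3 * g (t+h)) * ρ₁ 0) ≤ J1 := by
    have hpt : ∀ σ ∈ Icc (-1:ℝ) 1,
        -(A * (Real.exp 3 * g (t+h)) * ρ₁ 0)
          ≤ deriv g (t - h*σ) * ρ₁ σ - (ρ₁ 1 / 2) * deriv g (t - h*σ) := by
      intro σ hσ
      have hg3 : g (t - h*σ) ≤ Real.exp 3 * g (t+h) := gupper σ ⟨hσ.1, by linarith [hσ.2]⟩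
      have w0 : 0 ≤ ρ₁ σ - ρ₁ 1 / 2 := by linarith [hρ_ge1 σ hσ, hρ_nonneg 1]
      have q1 : (-A * g (t - h*σ)) * (ρ₁ σ - ρ₁ 1 / 2)
          ≤ deriv g (t - h*σ) * (ρ₁ σ - ρ₁ 1 / 2) :=
        mul_le_mul_of_nonneg_right (hg' _) w0
      have q2 : A * g (t - h*σ) * (ρ₁ σ - ρ₁ 1 / 2) ≤ A * (Real.exp 3 * g (t+h)) * ρ₁ 0 :=
        mul_le_mul (mul_le_mul_of_nonneg_left hg3 hA.le)
          (by linarith [hρ_le0 σ, hρ_nonneg 1]) w0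
          (mul_nonneg hA.le (mul_nonneg (Real.exp_pos 3).le (hgpos _).le))
      have q3 : deriv g (t - h*σ) * ρ₁ σ - (ρ₁ 1 / 2) * deriv g (t - h*σ)
          = deriv g (t - h*σ) * (ρ₁ σ - ρ₁ 1 / 2) := by ring
      have q4 : (-A * g (t - h*σ)) * (ρ₁ σ - ρ₁ 1 / 2)
          = -(A * g (t - h*σ) * (ρ₁ σ - ρ₁ 1 / 2)) := by ring
      linarith
    have hmono := intervalIntegral.integral_mono_on (by norm_num : (-1:ℝ) ≤ 1)
      (intervalIntegrable_const)
      ((hJint (-1) 1).sub ((hdgc (-1) 1).const_mul (ρ₁ 1 / 2))) hpt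
    rw [intervalIntegral.integral_const,
      intervalIntegral.integral_sub (hJint (-1) 1) ((hdgc (-1) 1).const_mul (ρ₁ 1 / 2)),
      intervalIntegral.integral_const_mul, hK] at hmono
    have : ((1:ℝ) - (-1)) • (-(A * (Real.exp 3 * g (t+h)) * ρ₁ 0))
        = -(2 * (A * (Real.exp 3 * g (t+h)) * ρ₁ 0)) := by
      rw [smul_eq_mul]; ring
    rw [this] at hmono
    linarith
  -- Assembly
  rw [hconv, hIsplit, ge_iff_le]
  have step1 : (h⁻¹ - A) * (ρ₁ 1 * g (t+h)) ≤ h⁻¹ * I1 := by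
    have e0 : (h⁻¹ - A) * (ρ₁ 1 * g (t+h)) = h⁻¹ * (((1 - A*h) * g (t+h)) * ρ₁ 1) := by
      field_simp
    rw [e0]
    exact mul_le_mul_of_nonneg_left hI1 hinv.le
  have step2 : h⁻¹ * I2 = -(h⁻¹ * (g (t+h) * ρ₁ 1)) + (J1 + J2) := by
    rw [hIBP]
    field_simp
  have hd1 : ρ₁ 1 * deltah g h t = (ρ₁ 1 / 2) * ((g (t+h) - g (t-h)) / h) := by
    unfold deltah
    field_simp
  have hcoef : (ρ₁ 1 + 3 * Real.exp 3 * ρ₁ 0) * (A * g (t+h))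
      ≤ (1 + (1 + 3 * Real.exp 3) * ρ₁ 0) * A * (g t + g (t+h) + g (t-h)) := by
    have hc1 : ρ₁ 1 + 3 * Real.exp 3 * ρ₁ 0 ≤ 1 + (1 + 3 * Real.exp 3) * ρ₁ 0 := by
      have := hρ_nonneg 0
      nlinarith [Real.exp_pos 3]
    have hc2 : A * g (t+h) ≤ A * (g t + g (t+h) + g (t-h)) := by
      have := hgpos t
      have := hgpos (t-h)
      nlinarith
    calc (ρ₁ 1 + 3 * Real.exp 3 * ρ₁ 0) * (A * g (t+h))
        ≤ (1 + (1 + 3 * Real.exp 3) * ρ₁ 0) * (A * g (t+h)) := by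
          exact mul_le_mul_of_nonneg_right hc1
            (mul_nonneg hA.le (hgpos _).le)
      _ ≤ (1 + (1 + 3 * Real.exp 3) * ρ₁ 0) * (A * (g t + g (t+h) + g (t-h))) := by
          exact mul_le_mul_of_nonneg_left hc2
            (by nlinarith [hρ_nonneg 0, Real.exp_pos 3])
      _ = (1 + (1 + 3 * Real.exp 3) * ρ₁ 0) * A * (g t + g (t+h) + g (t-h)) := by ring
  have hmul : h⁻¹ * (I1 + I2) = h⁻¹ * I1 + h⁻¹ * I2 := by ring
  rw [hmul, hd1]
  have hexp : (h⁻¹ - A) * (ρ₁ 1 * g (t+h)) - h⁻¹ * (g (t+h) * ρ₁ 1)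
      = -(A * (ρ₁ 1 * g (t+h))) := by ring
  linarith [step1, step2, hJ1, hJ2, hcoef, hexp]
end

section
/- For every m > 0 there exists a constant c > 0, depending only on m, such that (x^m − 1)(x − 1) ≥ c (x^{(m+1)/2} − 1)² for all x ≥ 1. -/
open Real

private lemma rpow_sub_one_le_mul (k x : ℝ) (hk : 1 ≤ k) (hx : 1 ≤ x) :
    x ^ k - 1 ≤ k * x ^ (k - 1) * (x - 1) := by
  have hx0 : (0:ℝ) < x := lt_of_lt_of_le one_pos hx
  have hB : 1 + k * (1/x - 1) ≤ (1/x) ^ k := by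
    have hs : (-1:ℝ) ≤ 1/x - 1 := by
      have : (0:ℝ) ≤ 1/x := by positivity
      linarith
    have := one_add_mul_self_le_rpow_one_add hs hk
    convert this using 2
    ring
  have hinv : (1/x) ^ k = (x ^ k)⁻¹ := by
    rw [one_div, Real.inv_rpow hx0.le]
  rw [hinv] at hB
  have hxk : (0:ℝ) < x ^ k := Real.rpow_pos_of_pos hx0 k
  have hmul : (x ^ k) * (1 + k * (1/x - 1)) ≤ 1 := by
    calc (x ^ k) * (1 + k * (1/x - 1)) ≤ (x ^ k) * (x ^ k)⁻¹ :=
          mul_le_mul_of_nonneg_left hB hxk.le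
      _ = 1 := mul_inv_cancel₀ hxk.ne'
  have hk1 : x ^ k * (1/x) = x ^ (k - 1) := by
    rw [one_div, ← Real.rpow_neg_one x, ← Real.rpow_add hx0]
    ring_nf
  have hkx : x ^ (k - 1) * x = x ^ k := by
    nth_rewrite 2 [← Real.rpow_one x]
    rw [← Real.rpow_add hx0]
    ring_nf
  nlinarith [hmul, hk1, hkx]

private lemma aux (m : ℝ) (hm : 1 ≤ m) :
    ∃ c : ℝ, 0 < c ∧ ∀ x : ℝ, 1 ≤ x →
      (x ^ m - 1) * (x - 1) ≥ c * (x ^ ((m + 1) / 2) - 1) ^ 2 := by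
  set k : ℝ := (m + 1) / 2 with hkdef
  have hk : 1 ≤ k := by rw [hkdef]; linarith
  have h2m : (0:ℝ) < (2:ℝ) ^ (m - 1) := Real.rpow_pos_of_pos two_pos _
  refine ⟨min (1/4) (m / (k ^ 2 * (2:ℝ) ^ (m - 1))), ?_, ?_⟩
  · apply lt_min
    · norm_num
    · positivity
  intro x hx
  have hx0 : (0:ℝ) < x := lt_of_lt_of_le one_pos hx
  have hxk1 : 1 ≤ x ^ k := Real.one_le_rpow hx (by linarith)
  have hxm1 : 1 ≤ x ^ m := Real.one_le_rpow hx (by linarith)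
  rcases le_total x 2 with h2 | h2
  · -- 1 ≤ x ≤ 2
    -- Bernoulli lower bound: x^m - 1 ≥ m (x-1)
    have hB : 1 + m * (x - 1) ≤ x ^ m := by
      have := one_add_mul_self_le_rpow_one_add (s := x - 1) (by linarith) hm
      convert this using 2; ring_nf
    -- upper bound on x^k - 1
    have hU : x ^ k - 1 ≤ k * x ^ (k - 1) * (x - 1) :=
      rpow_sub_one_le_mul k x hk hx
    have hUnn : (0:ℝ) ≤ k * x ^ (k - 1) * (x - 1) := by
      have : (0:ℝ) < x ^ (k-1) := Real.rpow_pos_of_pos hx0 _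
      have : (0:ℝ) ≤ x ^ (k-1) := this.le
      nlinarith
    have hsq : (x ^ k - 1) ^ 2 ≤ (k * x ^ (k - 1) * (x - 1)) ^ 2 := by
      apply sq_le_sq' _ hU
      nlinarith
    have hxk2 : (x ^ (k - 1)) ^ 2 = x ^ (m - 1) := by
      rw [← Real.rpow_natCast (x ^ (k-1)), ← Real.rpow_mul hx0.le]
      norm_num
      ring_nf
      rw [hkdef]; ring_nf
    have hbound : x ^ (m - 1) ≤ (2:ℝ) ^ (m - 1) :=
      Real.rpow_le_rpow hx0.le h2 (by linarith)
    have key : (x ^ k - 1) ^ 2 ≤ k ^ 2 * (2:ℝ) ^ (m - 1) * (x - 1) ^ 2 := by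
      calc (x ^ k - 1) ^ 2 ≤ (k * x ^ (k - 1) * (x - 1)) ^ 2 := hsq
        _ = k ^ 2 * (x ^ (k-1)) ^ 2 * (x - 1) ^ 2 := by ring
        _ = k ^ 2 * x ^ (m - 1) * (x - 1) ^ 2 := by rw [hxk2]
        _ ≤ k ^ 2 * (2:ℝ) ^ (m - 1) * (x - 1) ^ 2 := by gcongr
    have hc : min (1/4) (m / (k ^ 2 * (2:ℝ) ^ (m - 1))) ≤ m / (k ^ 2 * (2:ℝ) ^ (m - 1)) :=
      min_le_right _ _
    have hk2pos : (0:ℝ) < k ^ 2 * (2:ℝ) ^ (m - 1) := by positivity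
    calc min (1/4) (m / (k ^ 2 * (2:ℝ) ^ (m - 1))) * (x ^ k - 1) ^ 2
        ≤ (m / (k ^ 2 * (2:ℝ) ^ (m - 1))) * (x ^ k - 1) ^ 2 := by
          apply mul_le_mul_of_nonneg_right hc (sq_nonneg _)
      _ ≤ (m / (k ^ 2 * (2:ℝ) ^ (m - 1))) * (k ^ 2 * (2:ℝ) ^ (m - 1) * (x - 1) ^ 2) := by
          apply mul_le_mul_of_nonneg_left key
          positivity
      _ = m * (x - 1) ^ 2 := by field_simp
      _ ≤ (x ^ m - 1) * (x - 1) := by nlinarith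
  · -- x ≥ 2
    have hxm2 : (2:ℝ) ≤ x ^ m := by
      calc (2:ℝ) ≤ x := h2
        _ = x ^ (1:ℝ) := (Real.rpow_one x).symm
        _ ≤ x ^ m := Real.rpow_le_rpow_of_exponent_le hx hm
    have hprod : x ^ m * x = (x ^ k) ^ 2 := by
      rw [← Real.rpow_natCast (x ^ k), ← Real.rpow_mul hx0.le]
      nth_rewrite 2 [← Real.rpow_one x]
      rw [← Real.rpow_add hx0]
      norm_num
      ring_nf
      rw [hkdef]; ring_nf
    have h1 : x ^ m / 2 ≤ x ^ m - 1 := by linarith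
    have h2' : x / 2 ≤ x - 1 := by linarith
    have hsq : (x ^ k - 1) ^ 2 ≤ (x ^ k) ^ 2 := by nlinarith
    have hc : min (1/4) (m / (k ^ 2 * (2:ℝ) ^ (m - 1))) ≤ 1/4 := min_le_left _ _
    calc min (1/4) (m / (k ^ 2 * (2:ℝ) ^ (m - 1))) * (x ^ k - 1) ^ 2
        ≤ (1/4) * (x ^ k) ^ 2 := by
          apply mul_le_mul hc hsq (sq_nonneg _) (by norm_num)
      _ = (x ^ m * x) / 4 := by rw [hprod]; ring
      _ ≤ (x ^ m - 1) * (x - 1) := by nlinarith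

/-- Lemma A3, first inequality: for every `m > 0` there is `c > 0` such that
`(x^m − 1)(x − 1) ≥ c (x^((m+1)/2) − 1)²` for all `x ≥ 1`. -/
theorem pow_sub_one_mul_sub_one_ge (m : ℝ) (hm : 0 < m) :
    ∃ c : ℝ, 0 < c ∧ ∀ x : ℝ, 1 ≤ x →
      (x ^ m - 1) * (x - 1) ≥ c * (x ^ ((m + 1) / 2) - 1) ^ 2 := by
  rcases le_total 1 m with h1 | h1
  · exact aux m h1
  · obtain ⟨c, hc, hineq⟩ := aux (1/m) (by rw [le_div_iff₀ hm]; linarith)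
    refine ⟨c, hc, ?_⟩
    intro x hx
    have hx0 : (0:ℝ) < x := lt_of_lt_of_le one_pos hx
    have hy : 1 ≤ x ^ m := Real.one_le_rpow hx hm.le
    have := hineq (x ^ m) hy
    have e1 : (x ^ m) ^ (1/m : ℝ) = x := by
      rw [← Real.rpow_mul hx0.le]
      rw [mul_one_div, div_self hm.ne', Real.rpow_one]
    have e2 : (x ^ m) ^ ((1/m + 1) / 2 : ℝ) = x ^ ((m + 1) / 2) := by
      rw [← Real.rpow_mul hx0.le]
      congr 1
      field_simp
      ring
    rw [e1, e2] at this
    linarith [this]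
end

section
/- For every m > 0 there exists a constant c > 0, depending only on m, such that for all real numbers a, b ≥ 0, (a^m − b^m)(a − b) ≥ c (a^{(m+1)/2} − b^{(m+1)/2})². -/
open Real

/-- Key one-variable-exponent lemma: for `0 < α ≤ 1` and `0 ≤ y ≤ x`,
`(x^α - y^α)(x^(2-α) - y^(2-α)) ≥ α (x - y)²`. -/
lemma key_ineq {α x y : ℝ} (hα0 : 0 < α) (hα1 : α ≤ 1) (hy : 0 ≤ y) (hyx : y ≤ x) :
    (x ^ α - y ^ α) * (x ^ (2 - α) - y ^ (2 - α)) ≥ α * (x - y) ^ 2 := by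
  have hx : 0 ≤ x := hy.trans hyx
  rcases eq_or_lt_of_le hx with hx0 | hx0
  · have hy0 : y = 0 := le_antisymm (hyx.trans hx0.symm.le) hy
    rw [← hx0, hy0]
    simp
  -- Step A (AM-GM): y^α ≤ (1-α) x^α + α (x^(α-1) y)
  have hxa1 : (0:ℝ) ≤ x ^ (α - 1) := rpow_nonneg hx _
  have hA : y ^ α ≤ (1 - α) * x ^ α + α * (x ^ (α - 1) * y) := by
    have := Real.geom_mean_le_arith_mean2_weighted (by linarith : (0:ℝ) ≤ 1 - α) hα0.le
      (rpow_nonneg hx α) (mul_nonneg hxa1 hy) (by ring)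
    calc y ^ α = (x ^ α) ^ (1 - α) * (x ^ (α - 1) * y) ^ α := by
          rw [Real.mul_rpow hxa1 hy, ← Real.rpow_mul hx, ← Real.rpow_mul hx]
          rw [show (x:ℝ) ^ (α * (1 - α)) * (x ^ ((α - 1) * α) * y ^ α)
              = x ^ (α * (1 - α)) * x ^ ((α - 1) * α) * y ^ α by ring,
            ← Real.rpow_add hx0, show α * (1 - α) + (α - 1) * α = 0 by ring,
            Real.rpow_zero, one_mul]
      _ ≤ (1 - α) * x ^ α + α * (x ^ (α - 1) * y) := this
  have hxx : x ^ (α - 1) * x = x ^ α := by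
    rw [show x ^ (α-1) * x = x ^ (α-1) * x ^ (1:ℝ) by rw [Real.rpow_one],
      ← Real.rpow_add hx0]
    norm_num
  have hA' : α * (x ^ (α - 1) * (x - y)) ≤ x ^ α - y ^ α := by nlinarith
  -- Step B : x^(α-1) * (x^(2-α) - y^(2-α)) ≥ x - y
  have hx2 : x ^ (α - 1) * x ^ (2 - α) = x := by
    rw [← Real.rpow_add hx0]
    norm_num
  have hy2 : x ^ (α - 1) * y ^ (2 - α) ≤ y := by
    rcases eq_or_lt_of_le hy with hy0 | hy0
    · rw [← hy0, Real.zero_rpow (by linarith)]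
      simp
    · calc x ^ (α - 1) * y ^ (2 - α) ≤ y ^ (α - 1) * y ^ (2 - α) :=
            mul_le_mul_of_nonneg_right
              (Real.rpow_le_rpow_of_nonpos hy0 hyx (by linarith)) (rpow_nonneg hy _)
        _ = y := by rw [← Real.rpow_add hy0]; norm_num
  have hB : x ^ (α - 1) * (x ^ (2 - α) - y ^ (2 - α)) ≥ x - y := by nlinarith
  -- combine
  have hfac2 : 0 ≤ x ^ (2 - α) - y ^ (2 - α) := by
    have := Real.rpow_le_rpow hy hyx (by linarith : (0:ℝ) ≤ 2 - α)
    linarith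
  have hxy : 0 ≤ x - y := by linarith
  calc (x ^ α - y ^ α) * (x ^ (2 - α) - y ^ (2 - α))
      ≥ α * (x ^ (α - 1) * (x - y)) * (x ^ (2 - α) - y ^ (2 - α)) := by
        apply mul_le_mul_of_nonneg_right hA' hfac2
    _ = α * (x - y) * (x ^ (α - 1) * (x ^ (2 - α) - y ^ (2 - α))) := by ring
    _ ≥ α * (x - y) * (x - y) := by
        apply mul_le_mul_of_nonneg_left hB (mul_nonneg hα0.le hxy)
    _ = α * (x - y) ^ 2 := by ring

/-- The ordered version of the main inequality. -/
lemma key_ordered (m : ℝ) (hm : 0 < m) (a b : ℝ) (hb : 0 ≤ b) (hba : b ≤ a) :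
    (a ^ m - b ^ m) * (a - b) ≥
      min (2 * m / (m + 1)) (2 / (m + 1)) *
        (a ^ ((m + 1) / 2) - b ^ ((m + 1) / 2)) ^ 2 := by
  have ha : 0 ≤ a := hb.trans hba
  have hm1 : (0:ℝ) < m + 1 := by linarith
  set q : ℝ := 2 * m / (m + 1) with hq
  set p : ℝ := (m + 1) / 2 with hp
  have hpq : p * q = m := by rw [hp, hq]; field_simp
  have hpq' : p * (2 - q) = 1 := by rw [hp, hq]; field_simp; ring
  have hq0 : 0 < q := by positivity
  have hq2 : q < 2 := by
    rw [hq, div_lt_iff₀ hm1]; linarith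
  have hxm : (a ^ p) ^ q = a ^ m := by rw [← Real.rpow_mul ha, hpq]
  have hym : (b ^ p) ^ q = b ^ m := by rw [← Real.rpow_mul hb, hpq]
  have hxa : (a ^ p) ^ (2 - q) = a := by rw [← Real.rpow_mul ha, hpq', Real.rpow_one]
  have hyb : (b ^ p) ^ (2 - q) = b := by rw [← Real.rpow_mul hb, hpq', Real.rpow_one]
  have hyx : b ^ p ≤ a ^ p := Real.rpow_le_rpow hb hba (by positivity)
  have hyp : (0:ℝ) ≤ b ^ p := rpow_nonneg hb _
  have h2q : (2:ℝ) / (m + 1) = 2 - q := by rw [hq]; field_simp; ring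
  rw [h2q]
  rcases min_cases q (2 - q) with ⟨hmin, hle⟩ | ⟨hmin, hle⟩
  · have := key_ineq (α := q) hq0 (by linarith) hyp hyx
    rw [hxm, hym, hxa, hyb] at this
    rw [hmin]
    exact this
  · have := key_ineq (α := 2 - q) (by linarith) (by linarith) hyp hyx
    rw [show (2 : ℝ) - (2 - q) = q by ring, hxm, hym, hxa, hyb] at this
    rw [hmin]
    linarith [this]

/-- Two-variable form of Lemma A3: for every `m > 0` there is `c > 0` such that
`(a^m − b^m)(a − b) ≥ c (a^((m+1)/2) − b^((m+1)/2))²` for all `a, b ≥ 0`. -/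
theorem pow_sub_pow_mul_sub_ge (m : ℝ) (hm : 0 < m) :
    ∃ c : ℝ, 0 < c ∧ ∀ a b : ℝ, 0 ≤ a → 0 ≤ b →
      (a ^ m - b ^ m) * (a - b) ≥ c * (a ^ ((m + 1) / 2) - b ^ ((m + 1) / 2)) ^ 2 := by
  have hm1 : (0:ℝ) < m + 1 := by linarith
  refine ⟨min (2 * m / (m + 1)) (2 / (m + 1)), lt_min (by positivity) (by positivity),
    fun a b ha hb => ?_⟩
  rcases le_total b a with h | h
  · exact key_ordered m hm a b hb h
  · have := key_ordered m hm b a ha h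
    have hsq : (b ^ ((m + 1) / 2) - a ^ ((m + 1) / 2)) ^ 2
        = (a ^ ((m + 1) / 2) - b ^ ((m + 1) / 2)) ^ 2 := by ring
    rw [hsq] at this
    nlinarith [this]
end
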